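/- arXiv:0706.0460 — 2 statements merged into one kernel-verified Lean document; each statement's English description precedes it below -/
import Mathlib

section
/- For every w, v ∈ S_n, the dot action is trivial modulo 𝔪R on canonical classes: w · p_v − p_v ∈ 𝔪R. Consequently the dot action of S_n on the quotient R/𝔪R ≅ H^*(GL_n(ℂ)/B) fixes every Schubert class, i.e. the induced representation is a direct sum of trivial representations. -/
/-!
The dot action moves every GKM class `p`, not only the canonical ones, into `𝔪R`. As `Sₙ` is
generated by transpositions it suffices to take `τ = (i j)`. The GKM conditions of `p` and of
`τ·p` give `p − τ·p = (tᵢ − tⱼ) g` componentwise, and `g` is again a GKM class: along the edges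
labelled `τ` because `g` is `τ`-invariant, along all other edges because `t_k − t_l` is coprime
to `tᵢ − tⱼ`. Hence `τ·p − p = −(tᵢ − tⱼ) g ∈ 𝔪R`.
-/

open MvPolynomial Equiv Finset

noncomputable section

/-- The polynomial ring ℂ[t₁,…,tₙ]. -/
abbrev Pol (n : ℕ) : Type := MvPolynomial (Fin n) ℂ

/-- The action of a permutation `w` on polynomials by the substitution `tᵢ ↦ t_{w(i)}`. -/
def pact {n : ℕ} (w : Perm (Fin n)) (f : Pol n) : Pol n := rename ⇑w f

/-- The GKM condition defining `R ⊆ ∏_{v ∈ Sₙ} ℂ[t₁,…,tₙ]`: for every `v` and every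
transposition `(i j)` with `i < j`, the difference `p(v) − p((i j)v)` is divisible by
`tᵢ − tⱼ`. -/
def GKM (n : ℕ) (p : Perm (Fin n) → Pol n) : Prop :=
  ∀ (v : Perm (Fin n)) (i j : Fin n), i < j →
    (X i - X j : Pol n) ∣ (p v - p (Equiv.swap i j * v))

/-- The length of a permutation: its number of inversions. -/
def len {n : ℕ} (w : Perm (Fin n)) : ℕ :=
  (Finset.univ.filter fun q : Fin n × Fin n => q.1 < q.2 ∧ w q.2 < w q.1).card

/-- Bruhat order: the partial order generated by `u < (i j) u` whenever `ℓ(u) < ℓ((i j)u)`. -/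
def bruhatLE {n : ℕ} : Perm (Fin n) → Perm (Fin n) → Prop :=
  Relation.ReflTransGen
    (fun u v => (∃ i j : Fin n, i < j ∧ v = Equiv.swap i j * u) ∧ len u < len v)

/-- `p` is the canonical class (equivariant Schubert class) of `w`:
(i) each component is homogeneous of degree `ℓ(w)`; (ii) `p(v) = 0` unless `v ≥ w` in
Bruhat order; (iii) `p(w) = ∏ (tᵢ − tⱼ)` over pairs `i < j` with `ℓ((i j)w) < ℓ(w)`;
and `p` satisfies the GKM conditions. -/
def IsCanonical {n : ℕ} (w : Perm (Fin n)) (p : Perm (Fin n) → Pol n) : Prop :=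
  GKM n p ∧
  (∀ v, (p v).IsHomogeneous (len w)) ∧
  (∀ v, ¬ bruhatLE w v → p v = 0) ∧
  p w = ∏ q ∈ Finset.univ.filter
      (fun q : Fin n × Fin n => q.1 < q.2 ∧ len (Equiv.swap q.1 q.2 * w) < len w),
      (X q.1 - X q.2 : Pol n)

/-- The simple transposition `sᵢ = (i, i+1)`. -/
def sT (n i : ℕ) (h : i + 1 < n) : Perm (Fin n) :=
  Equiv.swap ⟨i, Nat.lt_of_succ_lt h⟩ ⟨i + 1, h⟩

/-- The dot (left) action: `(w·p)(v) = w(p(w⁻¹ v))`. -/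
def dot {n : ℕ} (w : Perm (Fin n)) (p : Perm (Fin n) → Pol n) : Perm (Fin n) → Pol n :=
  fun v => pact w (p (w⁻¹ * v))

/-- The star (right) action: `(p * w)(v) = p(vw)`. -/
def starAct {n : ℕ} (p : Perm (Fin n) → Pol n) (w : Perm (Fin n)) :
    Perm (Fin n) → Pol n :=
  fun v => p (v * w)

/-- `R` as a `ℂ[t₁,…,tₙ]`-submodule of the product. -/
def gkmSubmodule (n : ℕ) : Submodule (Pol n) (Perm (Fin n) → Pol n) where
  carrier := {p | GKM n p}
  add_mem' := by
    intro a b ha hb v i j hij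
    have h := dvd_add (ha v i j hij) (hb v i j hij)
    simpa [Pi.add_apply, add_sub_add_comm] using h
  zero_mem' := by
    intro v i j hij
    simp
  smul_mem' := by
    intro c p hp v i j hij
    have h := (hp v i j hij).mul_left c
    simpa [Pi.smul_apply, smul_eq_mul, mul_sub] using h

/-- The maximal ideal `𝔪 = (t₁,…,tₙ) ⊆ ℂ[t₁,…,tₙ]`. -/
def mIdeal (n : ℕ) : Ideal (Pol n) := Ideal.span (Set.range (X : Fin n → Pol n))

/-- The submodule `𝔪R`: finite sums of products `c • p` with `c ∈ 𝔪` and `p ∈ R`. -/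
def mR (n : ℕ) : Submodule (Pol n) (Perm (Fin n) → Pol n) :=
  Submodule.span (Pol n) {q | ∃ c ∈ mIdeal n, ∃ p, GKM n p ∧ q = c • p}

namespace MvPolynomial

variable {σ R : Type*} [CommRing R]

theorem sub_mem_of_forall_X_sub_mem {S : Type*} [CommRing S] [Algebra R S] {I : Ideal S}
    (φ ψ : MvPolynomial σ R →ₐ[R] S) (h : ∀ m, φ (X m) - ψ (X m) ∈ I)
    (f : MvPolynomial σ R) : φ f - ψ f ∈ I := by
  rw [← Ideal.Quotient.eq]
  change (Ideal.Quotient.mkₐ R I).comp φ f = (Ideal.Quotient.mkₐ R I).comp ψ f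
  congr 1
  exact algHom_ext fun m => Ideal.Quotient.eq.mpr (h m)

variable [DecidableEq σ]

def identifyVars (k l : σ) : MvPolynomial σ R →ₐ[R] MvPolynomial σ R :=
  aeval (Function.update X k (X l))

theorem identifyVars_X (k l m : σ) :
    identifyVars k l (X m : MvPolynomial σ R) = X (if m = k then l else m) := by
  rcases eq_or_ne m k with rfl | hm <;> simp [identifyVars, *]

theorem X_sub_X_dvd_sub_identifyVars (k l : σ) (f : MvPolynomial σ R) :
    X k - X l ∣ f - identifyVars k l f := by
  rw [← Ideal.mem_span_singleton]
  refine sub_mem_of_forall_X_sub_mem (AlgHom.id R _) (identifyVars k l) (fun m => ?_) f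
  rcases eq_or_ne m k with rfl | hm <;> simp [identifyVars_X, *]

theorem X_sub_X_dvd_iff_identifyVars_eq_zero {k l : σ} {f : MvPolynomial σ R} :
    X k - X l ∣ f ↔ identifyVars k l f = 0 := by
  refine ⟨?_, fun h => by simpa [h] using X_sub_X_dvd_sub_identifyVars k l f⟩
  rintro ⟨c, rfl⟩
  simp [identifyVars_X]

theorem X_sub_X_dvd_sub_rename_swap (i j : σ) (f : MvPolynomial σ R) :
    X i - X j ∣ f - rename (swap i j) f := by
  rw [← Ideal.mem_span_singleton]
  refine sub_mem_of_forall_X_sub_mem (AlgHom.id R _) (rename (swap i j)) (fun m => ?_) f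
  rcases eq_or_ne m i with rfl | hi
  · simp
  rcases eq_or_ne m j with rfl | hj
  · rw [AlgHom.id_apply, rename_X, swap_apply_right]
    exact Ideal.mem_span_singleton.mpr ⟨-1, by ring⟩
  · simp [swap_apply_of_ne_of_ne hi hj]

theorem X_sub_X_dvd_of_dvd_mul [IsDomain R] {i j k l : σ} (hij : i ≠ j)
    (hkl : swap k l ≠ swap i j) {f : MvPolynomial σ R} (h : X k - X l ∣ (X i - X j) * f) :
    X k - X l ∣ f := by
  -- identifying `X k` with `X l` keeps `X i - X j` nonzero, and the target is a domain
  rw [X_sub_X_dvd_iff_identifyVars_eq_zero] at h ⊢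
  rw [map_mul] at h
  refine (mul_eq_zero.mp h).resolve_left ?_
  rw [map_sub, identifyVars_X, identifyVars_X, sub_eq_zero, X_inj]
  split_ifs with hi hj hj
  · exact fun _ => hij (hi.trans hj.symm)
  · rintro rfl; exact hkl (by rw [hi])
  · rintro rfl; exact hkl (by rw [hj, swap_comm])
  · exact hij

end MvPolynomial

section GKM

variable {n : ℕ}

theorem GKM.X_sub_X_dvd {p : Perm (Fin n) → Pol n} (hp : GKM n p) (v : Perm (Fin n))
    {i j : Fin n} (hij : i ≠ j) : X i - X j ∣ p v - p (swap i j * v) := by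
  rcases hij.lt_or_gt with h | h
  · exact hp v i j h
  · rw [swap_comm, ← neg_sub, neg_dvd]
    exact hp v j i h

theorem dot_one (p : Perm (Fin n) → Pol n) : dot 1 p = p := by
  funext v
  simp [dot, pact]

theorem dot_mul (a b : Perm (Fin n)) (p : Perm (Fin n) → Pol n) :
    dot (a * b) p = dot a (dot b p) := by
  funext v
  simp [dot, pact, rename_rename, mul_assoc]

theorem dot_sub (w : Perm (Fin n)) (p q : Perm (Fin n) → Pol n) :
    dot w (p - q) = dot w p - dot w q := by
  funext v
  simp [dot, pact]

theorem dot_smul (w : Perm (Fin n)) (c : Pol n) (p : Perm (Fin n) → Pol n) :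
    dot w (c • p) = pact w c • dot w p := by
  funext v
  simp [dot, pact]

theorem GKM.dot_perm {p : Perm (Fin n) → Pol n} (hp : GKM n p) (w : Perm (Fin n)) :
    GKM n (dot w p) := by
  intro v i j hij
  have hne : w⁻¹ i ≠ w⁻¹ j := w⁻¹.injective.ne hij.ne
  have h := _root_.map_dvd (rename w) (hp.X_sub_X_dvd (w⁻¹ * v) hne)
  have hconj : swap (w⁻¹ i) (w⁻¹ j) * (w⁻¹ * v) = w⁻¹ * (swap i j * v) := by
    rw [swap_apply_apply]
    group
  rw [hconj] at h
  simpa [_root_.dot, pact] using h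

theorem smul_mem_mR {c : Pol n} (hc : c ∈ mIdeal n) {p : Perm (Fin n) → Pol n}
    (hp : GKM n p) : c • p ∈ mR n :=
  Submodule.subset_span ⟨c, hc, p, hp, rfl⟩

theorem GKM.exists_sub_dot_swap_eq_smul {p : Perm (Fin n) → Pol n} (hp : GKM n p)
    {i j : Fin n} (hij : i ≠ j) : ∃ g, p - dot (swap i j) p = (X i - X j : Pol n) • g := by
  have h : ∀ v, (X i - X j : Pol n) ∣ p v - dot (swap i j) p v := fun v => by
    have := dvd_add (hp.X_sub_X_dvd v hij) (X_sub_X_dvd_sub_rename_swap i j (p (swap i j * v)))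
    simpa [_root_.dot, pact] using this
  choose g hg using h
  exact ⟨g, funext hg⟩

theorem dot_swap_eq_self_of_smul_eq_sub_dot_swap {p g : Perm (Fin n) → Pol n} {i j : Fin n}
    (hij : i ≠ j) (hg : p - dot (swap i j) p = (X i - X j : Pol n) • g) :
    dot (swap i j) g = g := by
  have h := congrArg (dot (swap i j)) hg
  rw [dot_sub, dot_smul, ← dot_mul, swap_mul_self, dot_one] at h
  refine smul_right_injective _ (sub_ne_zero.mpr (X_injective.ne hij : (X i : Pol n) ≠ X j)) ?_
  have hpact : pact (swap i j) (X i - X j : Pol n) = -(X i - X j) := by simp [pact]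
  change (X i - X j : Pol n) • dot (swap i j) g = (X i - X j : Pol n) • g
  rw [← hg, ← neg_sub (dot (swap i j) p), h, hpact, neg_smul, neg_neg]

theorem GKM.of_smul_eq_sub_dot_swap {p g : Perm (Fin n) → Pol n} (hp : GKM n p)
    {i j : Fin n} (hij : i ≠ j) (hg : p - dot (swap i j) p = (X i - X j : Pol n) • g) :
    GKM n g := by
  intro v k l hkl
  by_cases hs : swap k l = swap i j
  · have h := congrFun (dot_swap_eq_self_of_smul_eq_sub_dot_swap hij hg) (swap i j * v)
    simp only [_root_.dot, pact, swap_inv, ← mul_assoc, swap_mul_self, one_mul] at h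
    rw [hs, ← h, ← hs]
    exact X_sub_X_dvd_sub_rename_swap k l (g v)
  · refine X_sub_X_dvd_of_dvd_mul hij hs ?_
    have h := dvd_sub (hp.X_sub_X_dvd v hkl.ne) ((hp.dot_perm (swap i j)).X_sub_X_dvd v hkl.ne)
    have hv := congrFun hg v
    have hsv := congrFun hg (swap k l * v)
    simp only [Pi.sub_apply, Pi.smul_apply, smul_eq_mul] at hv hsv
    rwa [mul_sub, ← hv, ← hsv, sub_sub_sub_comm]

theorem GKM.dot_swap_sub_mem_mR {p : Perm (Fin n) → Pol n} (hp : GKM n p) (i j : Fin n) :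
    dot (swap i j) p - p ∈ mR n := by
  rcases eq_or_ne i j with rfl | hij
  · rw [swap_self, ← Perm.one_def, dot_one, sub_self]
    exact zero_mem _
  obtain ⟨g, hg⟩ := hp.exists_sub_dot_swap_eq_smul hij
  rw [← neg_sub, hg, ← neg_smul]
  exact smul_mem_mR (neg_mem (sub_mem (Ideal.subset_span ⟨i, rfl⟩) (Ideal.subset_span ⟨j, rfl⟩)))
    (hp.of_smul_eq_sub_dot_swap hij hg)

theorem GKM.dot_sub_mem_mR {p : Perm (Fin n) → Pol n} (hp : GKM n p) (w : Perm (Fin n)) :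
    dot w p - p ∈ mR n := by
  induction w using Perm.swap_induction_on with
  | one => simp [dot_one]
  | swap_mul w i j _ ih =>
    have := add_mem ((hp.dot_perm w).dot_swap_sub_mem_mR i j) ih
    rwa [sub_add_sub_cancel, ← dot_mul] at this

end GKM

theorem dot_action_trivial_mod_mR_general (n : ℕ)
    (pw : Perm (Fin n) → Perm (Fin n) → Pol n)
    (hpw : ∀ w, IsCanonical w (pw w))
    (w v : Perm (Fin n)) :
    dot w (pw v) - pw v ∈ mR n ∧
    (Submodule.Quotient.mk (dot w (pw v)) : (Perm (Fin n) → Pol n) ⧸ mR n)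
      = Submodule.Quotient.mk (pw v) := by
  have h := GKM.dot_sub_mem_mR (hpw v).1 w
  exact ⟨h, (Submodule.Quotient.eq (mR n)).mpr h⟩

/-- the dot action is trivial modulo `𝔪R` on canonical classes:
`w · p_v − p_v ∈ 𝔪R`; consequently the induced action on
`R/𝔪R ≅ H^*(GLₙ(ℂ)/B)` fixes every Schubert class. -/
theorem dot_action_trivial_mod_mR (n : ℕ) (hn : 1 ≤ n)
    (pw : Perm (Fin n) → Perm (Fin n) → Pol n)
    (hpw : ∀ w, IsCanonical w (pw w))
    (w v : Perm (Fin n)) :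
    dot w (pw v) - pw v ∈ mR n ∧
    (Submodule.Quotient.mk (dot w (pw v)) : (Perm (Fin n) → Pol n) ⧸ mR n)
      = Submodule.Quotient.mk (pw v) :=
  dot_action_trivial_mod_mR_general n pw hpw w v
end
end

section
/- Let q_e = Σ_{w ∈ S_n} p_w (the sum of all canonical classes), and for u ∈ S_n let q_u = q_e * u, i.e. q_u(v) = q_e(vu) for all v ∈ S_n. Then the set {q_u : u ∈ S_n} is linearly independent over ℂ[t_1,…,t_n] in R: if Σ_{u ∈ S_n} c_u q_u = 0 with coefficients c_u ∈ ℂ[t_1,…,t_n], then all c_u = 0. -/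
open MvPolynomial Equiv Finset

noncomputable section

namespace Aux16

def NN (n : ℕ) : ℕ := (Finset.univ.filter fun q : Fin n × Fin n => q.1 < q.2).card

lemma len_le {n : ℕ} (w : Perm (Fin n)) : len w ≤ NN n := by
  apply Finset.card_le_card
  intro q hq
  simp only [Finset.mem_filter] at hq ⊢
  exact ⟨hq.1, hq.2.1⟩

lemma len_rev {n : ℕ} : len (Fin.revPerm : Perm (Fin n)) = NN n := by
  unfold len NN
  congr 1
  ext q
  simp [Fin.rev_lt_rev, and_self]

lemma eq_rev_of_len_eq {n : ℕ} {w : Perm (Fin n)} (h : len w = NN n) :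
    w = Fin.revPerm := by
  have hsub : (Finset.univ.filter fun q : Fin n × Fin n => q.1 < q.2 ∧ w q.2 < w q.1)
      ⊆ (Finset.univ.filter fun q : Fin n × Fin n => q.1 < q.2) := by
    intro q hq
    simp only [Finset.mem_filter] at hq ⊢
    exact ⟨hq.1, hq.2.1⟩
  have heq := Finset.eq_of_subset_of_card_le hsub (le_of_eq h.symm)
  have hinv : ∀ i j : Fin n, i < j → w j < w i := by
    intro i j hij
    have : (i, j) ∈ (Finset.univ.filter fun q : Fin n × Fin n => q.1 < q.2) := by
      simp [hij]
    rw [← heq] at this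
    simp only [Finset.mem_filter] at this
    exact this.2.2
  have hmono : StrictMono (fun i => w (Fin.rev i)) := by
    intro i j hij
    exact hinv (Fin.rev j) (Fin.rev i) (Fin.rev_lt_rev.2 hij)
  have hsurj : Function.Surjective (fun i => w (Fin.rev i)) := by
    intro x
    exact ⟨Fin.rev (w.symm x), by simp⟩
  have he : ∀ i, w (Fin.rev i) = i := by
    intro i
    have h3 := congrArg (fun f : Fin n ≃o Fin n => f i)
      (Subsingleton.elim (StrictMono.orderIsoOfSurjective _ hmono hsurj)
        (OrderIso.refl (Fin n)))
    simp only [OrderIso.refl_apply] at h3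
    exact (congrFun (StrictMono.coe_orderIsoOfSurjective _ hmono hsurj) i).symm.trans h3
  refine Equiv.ext fun i => ?_
  have h4 := he (Fin.rev i)
  rw [Fin.rev_rev] at h4
  rw [h4, Fin.revPerm_apply]

lemma len_lt_of_ne {n : ℕ} {w : Perm (Fin n)} (h : w ≠ Fin.revPerm) : len w < NN n :=
  lt_of_le_of_ne (len_le w) (fun hh => h (eq_rev_of_len_eq hh))

lemma bruhat_rev {n : ℕ} {x : Perm (Fin n)} (h : bruhatLE Fin.revPerm x) :
    x = Fin.revPerm := by
  induction h with
  | refl => rfl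
  | tail hab step ih =>
      subst ih
      exact absurd step.2 (by simp [len_rev, not_lt, len_le])

def sig (n : ℕ) : Pol n →+* Polynomial (Pol n) :=
  (MvPolynomial.aeval (fun i : Fin n => Polynomial.C (X i) * Polynomial.X)).toRingHom

lemma sig_homog {n d : ℕ} {f : Pol n} (hf : f.IsHomogeneous d) :
    sig n f = Polynomial.C f * Polynomial.X ^ d := by
  conv_lhs => rw [f.as_sum]
  rw [map_sum]
  have key : ∀ a ∈ f.support, sig n (monomial a (coeff a f))
      = Polynomial.C (monomial a (coeff a f)) * Polynomial.X ^ d := by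
    intro a ha
    have hdeg : (Finsupp.weight 1) a = d := hf (mem_support_iff.1 ha)
    have hsum : ∑ i ∈ a.support, a i = d := by
      rw [← hdeg, Finsupp.weight_apply, Finsupp.sum]
      simp
    rw [sig, AlgHom.toRingHom_eq_coe, RingHom.coe_coe, aeval_monomial]
    rw [Finsupp.prod]
    have h2 : ∀ i ∈ a.support, (Polynomial.C (X i : Pol n) * Polynomial.X) ^ a i
        = Polynomial.C ((X i : Pol n) ^ a i) * Polynomial.X ^ a i := by
      intro i _; rw [mul_pow, map_pow]
    rw [Finset.prod_congr rfl h2, Finset.prod_mul_distrib, ← map_prod,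
      Finset.prod_pow_eq_pow_sum, hsum]
    rw [monomial_eq, Finsupp.prod]
    have : (algebraMap ℂ (Polynomial (Pol n))) (coeff a f)
        = Polynomial.C (C (coeff a f)) := rfl
    rw [this, ← mul_assoc, ← map_mul]
  rw [Finset.sum_congr rfl key, ← Finset.sum_mul, ← map_sum, ← f.as_sum]

def DD (n : ℕ) : Pol n :=
  ∏ q ∈ Finset.univ.filter (fun q : Fin n × Fin n => q.1 < q.2), (X q.1 - X q.2 : Pol n)

lemma DD_ne (n : ℕ) : DD n ≠ 0 := by
  rw [DD, Finset.prod_ne_zero_iff]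
  intro q hq
  simp only [Finset.mem_filter] at hq
  exact sub_ne_zero.2 fun h => (ne_of_lt hq.2) (MvPolynomial.X_injective h)

lemma pw0_eq {n : ℕ} {p : Perm (Fin n) → Pol n} (hp : IsCanonical Fin.revPerm p)
    (x : Perm (Fin n)) : p x = if x = Fin.revPerm then DD n else 0 := by
  by_cases hx : x = Fin.revPerm
  · subst hx
    rw [if_pos rfl, hp.2.2.2, DD]
    congr 1
    ext q
    simp only [Finset.mem_filter, Finset.mem_univ, true_and]
    constructor
    · exact fun h => h.1
    · intro h
      refine ⟨h, ?_⟩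
      have hne : Equiv.swap q.1 q.2 * Fin.revPerm ≠ Fin.revPerm := by
        intro hh
        have h1 : Equiv.swap q.1 q.2 = 1 := by
          have := hh.trans (one_mul (Fin.revPerm : Perm (Fin n))).symm
          exact mul_right_cancel this
        have h2 := congrFun (congrArg (fun e : Perm (Fin n) => (e : Fin n → Fin n)) h1) q.1
        simp only [Equiv.swap_apply_left, Equiv.Perm.coe_one, id_eq] at h2
        exact (ne_of_lt h) h2.symm
      rw [len_rev]
      exact len_lt_of_ne hne
  · rw [if_neg hx]
    exact hp.2.2.1 x (fun h => hx (bruhat_rev h))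

end Aux16

open Aux16 in
/-- with `q_e = Σ_w p_w` and `q_u = q_e * u` (i.e. `q_u(v) = q_e(vu)`),
the set `{q_u : u ∈ Sₙ}` is linearly independent over `ℂ[t₁,…,tₙ]` in `R`. -/
theorem star_orbit_linearly_independent (n : ℕ) (hn : 1 ≤ n)
    (pw : Perm (Fin n) → Perm (Fin n) → Pol n)
    (hpw : ∀ w, IsCanonical w (pw w))
    (c : Perm (Fin n) → Pol n)
    (hc : ∑ u : Perm (Fin n),
        c u • starAct (∑ w : Perm (Fin n), pw w) u = 0) :
    ∀ u, c u = 0 := by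
  classical
  set M : Matrix (Perm (Fin n)) (Perm (Fin n)) (Pol n) :=
    Matrix.of fun v u => ∑ w : Perm (Fin n), pw w (v * u) with hM
  have hMc : M.mulVec c = 0 := by
    funext v
    have h0 := congrFun hc v
    simp only [Finset.sum_apply, Pi.smul_apply, Pi.zero_apply, starAct, smul_eq_mul] at h0
    rw [Matrix.mulVec, dotProduct]
    simp only [hM, Matrix.of_apply, Pi.zero_apply]
    rw [← h0]
    exact Finset.sum_congr rfl fun u _ => mul_comm _ _
  have hentry : ∀ x : Perm (Fin n), ((sig n) (∑ w : Perm (Fin n), pw w x)).coeff (NN n)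
      = (if x = Fin.revPerm then DD n else 0) := by
    intro x
    rw [map_sum, Polynomial.finset_sum_coeff]
    have h2 : ∀ w : Perm (Fin n), ((sig n) (pw w x)).coeff (NN n)
        = if NN n = len w then pw w x else 0 := by
      intro w
      rw [sig_homog ((hpw w).2.1 x), Polynomial.coeff_C_mul, Polynomial.coeff_X_pow]
      split_ifs with hh
      · rw [mul_one]
      · rw [mul_zero]
    rw [Finset.sum_congr rfl fun w _ => h2 w]
    rw [Finset.sum_eq_single Fin.revPerm]
    · rw [if_pos len_rev.symm]
      exact pw0_eq (hpw Fin.revPerm) x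
    · intro w _ hw
      rw [if_neg (fun hh => (len_lt_of_ne hw).ne hh.symm)]
    · intro hh
      exact absurd (Finset.mem_univ _) hh
  have hdeg : ∀ v u : Perm (Fin n), ((M.map (sig n)) v u).natDegree ≤ NN n := by
    intro v u
    simp only [Matrix.map_apply, hM, Matrix.of_apply]
    rw [map_sum]
    apply Polynomial.natDegree_sum_le_of_forall_le
    intro w _
    rw [sig_homog ((hpw w).2.1 (v * u))]
    refine le_trans (Polynomial.natDegree_mul_le) ?_
    simp only [Polynomial.natDegree_C, Polynomial.natDegree_X_pow, zero_add]
    exact len_le w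
  have hA : (Matrix.of fun v u : Perm (Fin n) =>
      if v * u = Fin.revPerm then DD n else 0).det ≠ 0 := by
    set τ : Perm (Perm (Fin n)) :=
      (Equiv.inv (Perm (Fin n))).trans (Equiv.mulRight Fin.revPerm) with hτ
    have hAeq : (Matrix.of fun v u : Perm (Fin n) =>
        if v * u = Fin.revPerm then DD n else 0) = DD n • (τ.permMatrix (Pol n)) := by
      ext v u
      simp only [Matrix.of_apply, Matrix.smul_apply, Equiv.Perm.permMatrix,
        PEquiv.toMatrix_apply, Equiv.toPEquiv_apply, Option.mem_def, Option.some.injEq,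
        hτ, Equiv.trans_apply, Equiv.inv_apply, Equiv.coe_mulRight, smul_eq_mul]
      have : (v * u = Fin.revPerm) ↔ (v⁻¹ * Fin.revPerm = u) := by
        constructor
        · intro h; rw [← h]; group
        · intro h; rw [← h]; group
      rw [if_congr this rfl rfl]
      split_ifs <;> simp
    rw [hAeq, Matrix.det_smul, Matrix.det_permutation]
    apply mul_ne_zero (pow_ne_zero _ (DD_ne n))
    rcases Int.units_eq_one_or (Equiv.Perm.sign τ) with h | h <;> simp [h]
  have hdet : M.det ≠ 0 := by
    intro h0
    have h1 : (M.map (sig n)).det = 0 := by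
      have := (sig n).map_det M
      rw [h0, map_zero, RingHom.mapMatrix_apply] at this
      exact this.symm
    have hcoeff : ((M.map (sig n)).det).coeff (Fintype.card (Perm (Fin n)) * NN n)
        = (Matrix.of fun v u : Perm (Fin n) =>
            if v * u = Fin.revPerm then DD n else 0).det := by
      rw [Matrix.det_apply, Matrix.det_apply, Polynomial.finset_sum_coeff]
      refine Finset.sum_congr rfl fun σ _ => ?_
      rw [Polynomial.coeff_smul]
      congr 1
      have hp := Polynomial.coeff_prod_of_natDegree_le
        (s := Finset.univ) (fun i => (M.map (sig n)) (σ i) i) (NN n)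
        (fun i _ => hdeg _ _)
      rw [Finset.card_univ] at hp
      rw [hp]
      refine Finset.prod_congr rfl fun v _ => ?_
      simp only [Matrix.map_apply, hM, Matrix.of_apply]
      exact hentry (σ v * v)
    rw [h1, Polynomial.coeff_zero] at hcoeff
    exact hA hcoeff.symm
  intro u
  have h2 : M.det • c = 0 := by
    have h3 := congrArg (fun v => (M.adjugate).mulVec v) hMc
    simp only [Matrix.mulVec_mulVec, Matrix.adjugate_mul, Matrix.smul_mulVec,
      Matrix.one_mulVec, Matrix.mulVec_zero] at h3
    exact h3
  have h4 := congrFun h2 u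
  simp only [Pi.smul_apply, smul_eq_mul, Pi.zero_apply] at h4
  rcases mul_eq_zero.1 h4 with h | h
  · exact absurd h hdet
  · exact h
end
end
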